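/- arXiv:1609.04288 — 2 statements merged into one kernel-verified Lean document; each statement's English description precedes it below -/
import Mathlib

section
/- For r = [m₁, m₂, …, m_k] with k ≥ 2 and m₂ ≥ 2, every term of the cyclic S-sequence CS(r) of the relator u_r is either m₁ or m₁+1, and no two consecutive terms both equal m₁+1. -/
/-- A letter in the free group on two generators `a = 0`, `b = 1`:
the generator together with the exponent sign (`true` = exponent `+1`). -/
abbrev Letter := Fin 2 × Bool

/-- A word in the generators `a±1, b±1`. -/
abbrev Word := List Letter

/-- Continued fraction `[m₁,…,m_k] = 1/(m₁ + 1/(m₂ + ⋯ + 1/m_k))`. -/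
def cf : List ℕ → ℚ
  | [] => 0
  | m :: rest => 1 / (m + cf rest)

/-- `ε_i = (-1)^⌊iq/p⌋`. -/
def eps (p q i : ℕ) : ℤ := (-1) ^ (i * q / p)

/-- The word `û_{q/p} = b^{ε₁} a^{ε₂} b^{ε₃} ⋯` (of length `p-1`) as a list of letters. -/
def hatList (p q : ℕ) : Word :=
  (List.range (p - 1)).map (fun j =>
    ((if (j + 1) % 2 = 1 then (1 : Fin 2) else 0), decide ((((j + 1) * q) / p) % 2 = 0)))

/-- The formal inverse of a word. -/
def invWord (w : Word) : Word := (w.map (fun x => (x.1, !x.2))).reverse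

/-- The 2-bridge relator word `u_{q/p}`: `a·û·b^{(-1)^q}·û⁻¹` for `p` odd, and
`a·û·a⁻¹·û⁻¹` for `p` even. -/
def uList (p q : ℕ) : Word :=
  ((0 : Fin 2), true) :: (hatList p q ++
    (if p % 2 = 1 then [((1 : Fin 2), decide (q % 2 = 0))] else [((0 : Fin 2), false)]) ++
    invWord (hatList p q))

/-- The relator word `u_r` of slope `r = q/p` (in lowest terms). -/
def slopeWord (r : ℚ) : Word := uList r.den r.num.toNat

/-- The slopes `r_0 = [4,3,3]`, `r_i = [4,2,(i-1)⟨3⟩,4,3]` for `i ≥ 1`. -/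
def rSlope : ℕ → ℚ
  | 0 => cf [4, 3, 3]
  | i + 1 => cf ([4, 2] ++ List.replicate i 3 ++ [4, 3])

/-- Run-lengths of a list of signs (auxiliary). -/
def runsAux : Bool → ℕ → List Bool → List ℕ
  | _, n, [] => [n]
  | s, n, x :: xs => if x = s then runsAux s (n + 1) xs else n :: runsAux x 1 xs

/-- The S-sequence of a word: the lengths of its maximal positive/negative blocks. -/
def Sseq (w : Word) : List ℕ :=
  match w.map Prod.snd with
  | [] => []
  | s :: xs => runsAux s 1 xs

/-- A word is reduced: no adjacent mutually inverse letters. -/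
def Reduced (w : Word) : Prop :=
  List.Chain' (fun u v => ¬(u.1 = v.1 ∧ u.2 ≠ v.2)) w

/-- A word is alternating: adjacent letters use different generators. -/
def Alternating (w : Word) : Prop := List.Chain' (fun u v => u.1 ≠ v.1) w

/-- Cyclically reduced: reduced including the wrap-around pair. -/
def CyclicallyReduced (w : Word) : Prop :=
  List.Chain' (fun u v => ¬(u.1 = v.1 ∧ u.2 ≠ v.2)) (w ++ w)

/-- Cyclically alternating: alternating including the wrap-around pair. -/
def CyclicallyAlternating (w : Word) : Prop :=
  List.Chain' (fun u v => u.1 ≠ v.1) (w ++ w)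

/-- The word starts at a block boundary of the cyclic word: either all signs agree,
or the first and last signs differ. -/
def StartsAtBoundary (w : Word) : Prop :=
  (∀ x ∈ w, ∀ y ∈ w, x.2 = y.2) ∨ (∀ x ∈ w.head?, ∀ y ∈ w.getLast?, x.2 ≠ y.2)

/-- `L` is a linear representative of the cyclic S-sequence `CS(w)`:
the S-sequence of some rotation of `w` starting at a block boundary. -/
def IsCSRep (w : Word) (L : List ℕ) : Prop :=
  ∃ n, StartsAtBoundary (w.rotate n) ∧ Sseq (w.rotate n) = L

/-- From a linear representative `L = (m+1, t₁⟨m⟩, m+1, t₂⟨m⟩, …)` of a CS-sequence,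
extract the CT-sequence `(t₁, t₂, …)` of run-lengths of `m`'s. -/
def ctOf (m : ℕ) (L : List ℕ) : List ℕ := ((L.splitOn (m + 1)).drop 1).map List.length

/-- The cyclic sequence represented by `L` contains `pat` as a contiguous subsequence. -/
def CyclicContains (L pat : List ℕ) : Prop := ∃ k, pat.isPrefixOf (L.rotate k)

/-- The number of (cyclic) occurrences of `pat` as a contiguous subsequence of
the cyclic sequence represented by `L`. -/
def cyclicCount (pat L : List ℕ) : ℕ :=
  ((List.range L.length).filter (fun k => pat.isPrefixOf (L.rotate k))).length

/-- `⟨⟨S₁, S₂, S₁, S₂⟩⟩` is the symmetric decomposition of the cyclic S-sequence of `w`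
(for a slope whose continued fraction starts with `m`): each `Sᵢ` is a palindrome,
`S₁` begins and ends with `m+1`, and `S₂` begins and ends with `m`. -/
def IsSymmDecomp (w : Word) (m : ℕ) (S1 S2 : List ℕ) : Prop :=
  IsCSRep w (S1 ++ S2 ++ S1 ++ S2) ∧ S1.reverse = S1 ∧ S2.reverse = S2 ∧
  (∀ x ∈ S1.head?, x = m + 1) ∧ (∀ x ∈ S1.getLast?, x = m + 1) ∧
  S2.head? = some m ∧ S2.getLast? = some m

/-- Expand a sequence of block lengths into the corresponding list of signs,
blocks alternating in sign starting with `s`. -/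
def signList : Bool → List ℕ → List Bool
  | _, [] => []
  | s, n :: rest => List.replicate n s ++ signList (!s) rest

/-- The alternating word with initial generator `g0`, initial sign `s0`,
and S-sequence `S`. -/
def altWord (g0 : Fin 2) (s0 : Bool) (S : List ℕ) : Word :=
  (List.range (signList s0 S).length).zipWith (fun (k : ℕ) s => ((g0 + (Fin.ofNat 2 k)), s))
    (signList s0 S)

/-- The product `w * w'` is freely reduced without cancellation at the junction. -/
def NoCancel (w w' : Word) : Prop :=
  ∀ x ∈ w.getLast?, ∀ y ∈ w'.head?, ¬(x.1 = y.1 ∧ x.2 ≠ y.2)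

/-- The word `X`: alternating, starting with `a`, with S-sequence `(4,4,4,5,4,4)`
(it ends with `a⁻¹`). -/
def Xword : Word := altWord 0 true [4, 4, 4, 5, 4, 4]

/-- The endomorphism of `F(a,b)` with `a ↦ X⁻¹`, `b ↦ b⁻¹`. -/
def fmap : FreeGroup (Fin 2) →* FreeGroup (Fin 2) :=
  FreeGroup.lift (fun i => if i = 0 then (FreeGroup.mk Xword)⁻¹ else (FreeGroup.of 1)⁻¹)

/-- The set of relators `{u_{r_i} : i ≥ 0}`. -/
def relsG : Set (FreeGroup (Fin 2)) := {x | ∃ i, x = FreeGroup.mk (slopeWord (rSlope i))}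

/-- The symmetrized set generated by the relators `u_{r_i}`: all cyclic permutations
of the `u_{r_i}` and of their inverses. -/
def Rset : Set Word :=
  {w | ∃ i n, w = (slopeWord (rSlope i)).rotate n ∨
      w = (invWord (slopeWord (rSlope i))).rotate n}

/-!
For `0 ≤ i < 2p` the `i`-th letter of `u_{q/p}` has sign `ε_i = (-1)^⌊iq/p⌋`: the second half of
the word is the inverse of the first, which matches `ε_{2p-i} = -ε_i` (as `p ∤ iq` for `0 < i < p`).
Since `ε` has period `2p`, the maximal blocks of the cyclic word are the level sets of `⌊iq/p⌋`,
i.e. the intervals `[⌈kp/q⌉, ⌈(k+1)p/q⌉)`, and `CS(q/p)` is the cyclic sequence of the `2q` block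
lengths `⌈(k+1)p/q⌉ - ⌈kp/q⌉`. For `q/p = [m₁, m₂, …]` with `m₂ ≥ 2` we have
`m₁ < p/q ≤ m₁ + 1/2`, so each block length is `m₁` or `m₁+1`, and two consecutive ones add up to
at most `⌈2p/q⌉ ≤ 2m₁ + 1`.
-/

namespace TwoBridge

lemma runsAux_replicate_append (s : Bool) (n k : ℕ) (l : List Bool) :
    runsAux s n (List.replicate k s ++ l) = runsAux s (n + k) l := by
  induction k generalizing n with
  | zero => rfl
  | succ k ih => simp [List.replicate_succ, runsAux, ih, Nat.add_right_comm n 1, Nat.add_assoc]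

lemma runsAux_signList_not (s : Bool) (n : ℕ) (S : List ℕ) (hS : ∀ m ∈ S, 0 < m) :
    runsAux s n (signList (!s) S) = n :: S := by
  induction S generalizing s n with
  | nil => rfl
  | cons m S ih =>
    obtain ⟨m, rfl⟩ := Nat.exists_eq_add_one.mpr (hS _ List.mem_cons_self)
    simp only [signList, List.replicate_succ, List.cons_append, runsAux, Bool.not_eq_self,
      if_false, runsAux_replicate_append, Nat.add_comm 1 m]
    rw [ih _ _ fun k hk => hS k (List.mem_cons_of_mem _ hk)]

lemma Sseq_eq_of_map_snd_eq_signList {w : Word} {s : Bool} {S : List ℕ} (hS : ∀ m ∈ S, 0 < m)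
    (hw : w.map Prod.snd = signList s S) : Sseq w = S := by
  unfold Sseq
  rw [hw]
  cases S with
  | nil => rfl
  | cons m S =>
    obtain ⟨m, rfl⟩ := Nat.exists_eq_add_one.mpr (hS _ List.mem_cons_self)
    simp only [signList, List.replicate_succ, List.cons_append, runsAux_replicate_append]
    rw [runsAux_signList_not _ _ _ fun k hk => hS k (List.mem_cons_of_mem _ hk), Nat.add_comm]

lemma head_ne_getLast_of_startsAtBoundary {w : Word} (hw : StartsAtBoundary w) {a b : Bool}
    (ha : a ∈ w.map Prod.snd) (hb : b ∈ w.map Prod.snd) (hab : a ≠ b) :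
    ∀ x ∈ (w.map Prod.snd).head?, ∀ y ∈ (w.map Prod.snd).getLast?, x ≠ y := by
  rcases hw with hall | hends
  · obtain ⟨u, hu, rfl⟩ := List.mem_map.mp ha
    obtain ⟨v, hv, rfl⟩ := List.mem_map.mp hb
    exact absurd (hall u hu v hv) hab
  · simp only [List.head?_map, List.getLast?_map, Option.mem_def, Option.map_eq_some_iff]
    rintro _ ⟨u, hu, rfl⟩ _ ⟨v, hv, rfl⟩
    exact hends u hu v hv

lemma map_range_rotate_of_periodic {α : Type*} {f : ℕ → α} {N : ℕ} (hf : Function.Periodic f N)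
    (n : ℕ) : ((List.range N).map f).rotate n = (List.range N).map fun i => f (i + n) := by
  refine List.ext_getElem (by simp) fun i _ _ => ?_
  simp [List.getElem_rotate, hf.map_mod_nat]

section Signs

variable {p q : ℕ}

def letterSign (p q i : ℕ) : Bool := decide (i * q / p % 2 = 0)

lemma letterSign_periodic (hp : 0 < p) : Function.Periodic (letterSign p q) (2 * p) := by
  intro i
  have : (i + 2 * p) * q = i * q + p * (2 * q) := by ring
  simp only [letterSign, this, Nat.add_mul_div_left _ _ hp, Nat.add_mul_mod_self_left]

lemma letterSign_two_mul_sub {j : ℕ} (hco : p.Coprime q) (hj : 0 < j) (hjp : j < p) :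
    letterSign p q (2 * p - j) = !letterSign p q j := by
  have hp : 0 < p := hj.trans hjp
  set d := j * q / p
  set e := j * q % p
  have hdm : p * d + e = j * q := Nat.div_add_mod _ _
  have he : 0 < e := Nat.pos_of_ne_zero fun h0 =>
    Nat.not_le_of_lt hjp (Nat.le_of_dvd hj (hco.dvd_of_dvd_mul_right (Nat.dvd_of_mod_eq_zero h0)))
  have hep : e < p := Nat.mod_lt _ hp
  have hdq : d < q := by
    have hq : 0 < q := Nat.pos_of_ne_zero (by rintro rfl; simp [e] at he)
    rw [Nat.div_lt_iff_lt_mul hp]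
    exact Nat.mul_lt_mul_of_pos_right hjp hq |>.trans_eq (Nat.mul_comm p q)
  have hsplit : (2 * p - j) * q = (p - e) + p * (2 * q - d - 1) := by
    zify [hjp.le.trans (Nat.le_mul_of_pos_left p two_pos), hep.le, (by omega : d ≤ 2 * q),
      (by omega : 1 ≤ 2 * q - d)] at hdm ⊢
    linear_combination hdm
  have hquot : (2 * p - j) * q / p = 2 * q - d - 1 := by
    rw [hsplit, Nat.add_mul_div_left _ _ hp, Nat.div_eq_of_lt (by omega), zero_add]
  have hpar : (2 * q - d - 1) % 2 = 0 ↔ ¬d % 2 = 0 := by omega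
  change decide ((2 * p - j) * q / p % 2 = 0) = !decide (d % 2 = 0)
  simp only [hquot, hpar, decide_not]

lemma hatList_map_snd (p q : ℕ) :
    (hatList p q).map Prod.snd = (List.range' 1 (p - 1)).map (letterSign p q) := by
  simp only [hatList, List.map_map, List.range'_eq_map_range]
  refine List.map_congr_left fun j _ => ?_
  simp [letterSign, Nat.add_comm 1 j]

lemma invWord_map_snd (w : Word) :
    (invWord w).map Prod.snd = ((w.map Prod.snd).map not).reverse := by
  simp [invWord, List.map_reverse, List.map_map, Function.comp_def]

lemma range_two_mul_eq_append (hp : 0 < p) :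
    List.range (2 * p) = List.range' 0 1 ++ List.range' 1 (p - 1) ++ List.range' p 1 ++
      List.range' (p + 1) (p - 1) := by
  rw [List.range_eq_range', show 2 * p = 1 + (p - 1) + 1 + (p - 1) by omega,
    ← List.range'_append_1, ← List.range'_append_1, ← List.range'_append_1]
  simp only [Nat.zero_add, show 1 + (p - 1) = p by omega]

lemma uList_map_snd (hp : 0 < p) (hco : p.Coprime q) :
    (uList p q).map Prod.snd = (List.range (2 * p)).map (letterSign p q) := by
  have hmid : (if p % 2 = 1 then [((1 : Fin 2), decide (q % 2 = 0))]
      else [((0 : Fin 2), false)]).map Prod.snd = (List.range' p 1).map (letterSign p q) := by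
    split_ifs with h
    · simp [letterSign, Nat.mul_div_cancel_left q hp]
    · have hq : Odd q := Nat.coprime_two_left.mp
        (hco.coprime_dvd_left (Nat.dvd_of_mod_eq_zero (by omega)))
      simp [letterSign, Nat.mul_div_cancel_left q hp, Nat.odd_iff.mp hq]
  have hinv : (((List.range' 1 (p - 1)).map (letterSign p q)).map not).reverse
      = (List.range' (p + 1) (p - 1)).map (letterSign p q) := by
    rw [List.map_map, ← List.map_reverse, List.reverse_range', List.range'_eq_map_range,
      List.map_map, List.map_map]
    refine List.map_congr_left fun j hj => ?_
    rw [List.mem_range] at hj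
    have := letterSign_two_mul_sub hco (j := p - 1 - j) (by omega) (by omega)
    rw [show 2 * p - (p - 1 - j) = p + 1 + j by omega] at this
    simp [this]
  simp only [uList, List.map_cons, List.map_append, hatList_map_snd, invWord_map_snd, hmid, hinv,
    range_two_mul_eq_append hp]
  simp [letterSign]

lemma map_snd_rotate_uList (hp : 0 < p) (hco : p.Coprime q) (n : ℕ) :
    ((uList p q).rotate n).map Prod.snd =
      (List.range (2 * p)).map fun i => letterSign p q (i + n) := by
  rw [List.map_rotate, uList_map_snd hp hco, map_range_rotate_of_periodic (letterSign_periodic hp)]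

end Signs

def blockStart (p q k : ℕ) : ℕ := k * p ⌈/⌉ q

def blockLength (p q k : ℕ) : ℕ := blockStart p q (k + 1) - blockStart p q k

section Blocks

variable {p q : ℕ}

lemma blockStart_le_iff (hq : 0 < q) {k i : ℕ} : blockStart p q k ≤ i ↔ k * p ≤ q * i :=
  ceilDiv_le_iff_le_mul hq

lemma blockStart_mono (hq : 0 < q) : Monotone (blockStart p q) := fun _ _ h =>
  (gc_mul_ceilDiv hq).monotone_l (Nat.mul_le_mul_right p h)

lemma blockStart_add_le (hq : 0 < q) {k j c : ℕ} (h : j * p ≤ q * c) :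
    blockStart p q (k + j) ≤ blockStart p q k + c := by
  rw [blockStart_le_iff hq, Nat.mul_add, Nat.add_mul]
  exact Nat.add_le_add ((blockStart_le_iff hq).mp le_rfl) h

lemma le_blockStart_add (hq : 0 < q) {k j c : ℕ} (h : q * c ≤ j * p) :
    blockStart p q k + c ≤ blockStart p q (k + j) := by
  have hk : (k + j) * p ≤ q * blockStart p q (k + j) := (blockStart_le_iff hq).mp le_rfl
  rw [Nat.add_mul] at hk
  rw [← Nat.le_sub_iff_add_le (Nat.le_of_mul_le_mul_left (h.trans (by nlinarith)) hq),
    blockStart_le_iff hq, Nat.mul_sub]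
  omega

lemma blockStart_add_mul (hq : 0 < q) (k n : ℕ) :
    blockStart p q (k + n * q) = blockStart p q k + n * p := by
  have : (k + n * q) * p + q - 1 = k * p + q - 1 + q * (n * p) := by
    zify [(by omega : 1 ≤ k * p + q), (by omega : 1 ≤ (k + n * q) * p + q)]
    ring
  rw [blockStart, blockStart, Nat.ceilDiv_eq_add_pred_div, Nat.ceilDiv_eq_add_pred_div, this,
    Nat.add_mul_div_left _ _ hq]

lemma div_eq_of_mem_block (hq : 0 < q) {k i : ℕ} (h₁ : blockStart p q k ≤ i)
    (h₂ : i < blockStart p q (k + 1)) : i * q / p = k := by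
  rw [blockStart_le_iff hq] at h₁
  rw [← not_le, blockStart_le_iff hq] at h₂
  exact Nat.div_eq_of_lt_le (by linarith) (by linarith)

lemma blockStart_eq_of_letterSign_ne (hp : 0 < p) (hq : 0 < q) {j : ℕ}
    (h : letterSign p q (j + 1) ≠ letterSign p q j) :
    blockStart p q ((j + 1) * q / p) = j + 1 := by
  set k := (j + 1) * q / p
  have hlt : j * q / p < k := lt_of_le_of_ne
    (Nat.div_le_div_right (Nat.mul_le_mul_right _ j.le_succ))
    fun he => h (by simp [letterSign, he, k])
  rw [Nat.div_lt_iff_lt_mul hp] at hlt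
  have hle : k * p ≤ (j + 1) * q := Nat.div_mul_le_self _ _
  refine le_antisymm ((blockStart_le_iff hq).mpr (by linarith)) ?_
  by_contra hcon
  rw [not_le, Nat.lt_succ_iff, blockStart_le_iff hq] at hcon
  linarith

lemma map_letterSign_block (hq : 0 < q) (k : ℕ) :
    (List.range (blockLength p q k)).map (fun i => letterSign p q (blockStart p q k + i)) =
      List.replicate (blockLength p q k) (decide (k % 2 = 0)) := by
  rw [List.map_congr_left (g := fun _ => decide (k % 2 = 0)), List.map_const', List.length_range]
  intro i hi
  rw [List.mem_range, blockLength] at hi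
  have := blockStart_mono (p := p) hq (Nat.le_add_right k 1)
  simp only [letterSign, div_eq_of_mem_block hq (Nat.le_add_right (blockStart p q k) i) (by omega)]

lemma map_letterSign_blocks (hq : 0 < q) (N k : ℕ) :
    (List.range (blockStart p q (k + N) - blockStart p q k)).map
        (fun i => letterSign p q (blockStart p q k + i)) =
      signList (decide (k % 2 = 0)) ((List.range N).map fun j => blockLength p q (k + j)) := by
  induction N generalizing k with
  | zero => simp [signList]
  | succ N ih =>
    have h₁ := blockStart_mono (p := p) hq (Nat.le_add_right k 1)
    have hlen : blockStart p q (k + (N + 1)) - blockStart p q k =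
        blockLength p q k + (blockStart p q (k + 1 + N) - blockStart p q (k + 1)) := by
      have := blockStart_mono (p := p) hq (Nat.le_add_right (k + 1) N)
      rw [blockLength, ← Nat.add_assoc, Nat.add_right_comm k N 1]
      omega
    have hparity : decide ((k + 1) % 2 = 0) = !decide (k % 2 = 0) := by
      rcases Nat.mod_two_eq_zero_or_one k with h | h <;> simp [h, Nat.succ_mod_two_eq_zero_iff]
    rw [hlen, List.range_add, List.map_append, List.map_map, map_letterSign_block hq,
      List.range_succ_eq_map, List.map_cons, List.map_map, signList, ← hparity]
    congr 1
    convert ih (k + 1) using 2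
    · funext i
      simp only [Function.comp_apply, blockLength]
      congr 1
      omega
    · refine List.map_congr_left fun j _ => ?_
      simp [Nat.add_assoc, Nat.add_comm 1 j]

end Blocks

section Lengths

variable {p q m : ℕ} (hq : 0 < q) (hA : m * q ≤ p) (hB : 2 * p ≤ (2 * m + 1) * q)
include hq

lemma blockLength_periodic : Function.Periodic (blockLength p q) q := fun k => by
  have h₁ := blockStart_add_mul (p := p) hq (k + 1) 1
  have h₂ := blockStart_add_mul (p := p) hq k 1
  rw [Nat.add_right_comm] at h₁
  simp only [blockLength, Nat.one_mul] at *
  omega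

include hA in
lemma le_blockLength (k : ℕ) : m ≤ blockLength p q k := by
  have := le_blockStart_add (p := p) (k := k) (j := 1) (c := m) hq (by linarith)
  rw [blockLength]
  omega

include hB in
lemma blockLength_le (k : ℕ) : blockLength p q k ≤ m + 1 := by
  have := blockStart_add_le (p := p) (k := k) (j := 1) (c := m + 1) hq (by linarith)
  rw [blockLength]
  omega

include hA hB in
lemma blockLength_eq_or_eq (k : ℕ) : blockLength p q k = m ∨ blockLength p q k = m + 1 := by
  have := le_blockLength hq hA k
  have := blockLength_le hq hB k
  omega

include hB in
lemma not_blockLength_eq_succ_and_eq_succ (k : ℕ) :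
    ¬(blockLength p q k = m + 1 ∧ blockLength p q (k + 1) = m + 1) := by
  have h₂ := blockStart_add_le (p := p) (k := k) (j := 2) (c := 2 * m + 1) hq (by linarith)
  have h₁ := blockStart_mono (p := p) hq (Nat.le_add_right k 1)
  have h₁' := blockStart_mono (p := p) hq (Nat.le_add_right (k + 1) 1)
  simp only [blockLength, Nat.add_assoc, Nat.reduceAdd] at *
  omega

include hA in
lemma letterSign_two_mul_sub_one (hm : 0 < m) : letterSign p q (2 * p - 1) = false := by
  have h₁ := le_blockStart_add (p := p) (k := 2 * q - 1) (j := 1) (c := m) hq (by linarith)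
  have h₂ : blockStart p q (2 * q) = 2 * p := by
    simpa [blockStart] using blockStart_add_mul (p := p) hq 0 2
  rw [Nat.sub_add_cancel (by omega), h₂] at h₁
  have := div_eq_of_mem_block (p := p) hq (k := 2 * q - 1) (i := 2 * p - 1) (by omega)
    (by rw [Nat.sub_add_cancel (by omega), h₂]; omega)
  simp only [letterSign, this, decide_eq_false_iff_not]
  omega

end Lengths

section Word

variable {p q m : ℕ} (hp : 0 < p) (hq : 0 < q) (hco : p.Coprime q) (hm : 0 < m) (hA : m * q ≤ p)
include hp hq hco hm hA

lemma exists_blockStart_eq_of_startsAtBoundary {n : ℕ}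
    (hn : StartsAtBoundary ((uList p q).rotate n)) : ∃ k, blockStart p q k = n + 2 * p := by
  have hmem : ∀ i < 2 * p, letterSign p q i ∈ ((uList p q).rotate n).map Prod.snd := by
    intro i hi
    rw [List.map_rotate, uList_map_snd hp hco, List.mem_rotate]
    exact List.mem_map_of_mem (List.mem_range.mpr hi)
  have hends := head_ne_getLast_of_startsAtBoundary hn (hmem 0 (by omega))
    (hmem (2 * p - 1) (by omega))
    (by rw [letterSign_two_mul_sub_one hq hA hm]; simp [letterSign])
  simp only [map_snd_rotate_uList hp hco, List.head?_map, List.getLast?_map, List.head?_range,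
    List.getLast?_range, show 2 * p ≠ 0 by omega, if_false, Option.map_some, Option.mem_def,
    Option.some.injEq, forall_eq', Nat.zero_add] at hends
  have hflip : letterSign p q (n + 2 * p - 1 + 1) ≠ letterSign p q (n + 2 * p - 1) := by
    rwa [Nat.sub_add_cancel (by omega), letterSign_periodic hp, Nat.add_sub_assoc (by omega),
      Nat.add_comm n]
  exact ⟨_, by rw [blockStart_eq_of_letterSign_ne hp hq hflip, Nat.sub_add_cancel (by omega)]⟩

theorem exists_Sseq_rotate_uList {n : ℕ} (hn : StartsAtBoundary ((uList p q).rotate n)) :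
    ∃ k, Sseq ((uList p q).rotate n) =
      (List.range (2 * q)).map fun j => blockLength p q (k + j) := by
  obtain ⟨k, hk⟩ := exists_blockStart_eq_of_startsAtBoundary hp hq hco hm hA hn
  refine ⟨k, Sseq_eq_of_map_snd_eq_signList (s := decide (k % 2 = 0)) (fun _ hx => ?_) ?_⟩
  · obtain ⟨j, -, rfl⟩ := List.mem_map.mp hx
    exact hm.trans_le (le_blockLength hq hA _)
  · rw [← map_letterSign_blocks hq, blockStart_add_mul hq, hk, Nat.add_sub_cancel_left,
      map_snd_rotate_uList hp hco]
    refine List.map_congr_left fun i _ => ?_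
    rw [Nat.add_right_comm, letterSign_periodic hp, Nat.add_comm]

end Word

lemma cf_nonneg (l : List ℕ) : 0 ≤ cf l := by
  induction l with
  | nil => exact le_rfl
  | cons m rest ih => exact one_div_nonneg.mpr (add_nonneg (Nat.cast_nonneg m) ih)

lemma cf_cons_cons_bounds (m : ℕ) {n : ℕ} (hn : 2 ≤ n) (rest : List ℕ) :
    (m : ℚ) * cf (m :: n :: rest) < 1 ∧ 2 ≤ (2 * m + 1) * cf (m :: n :: rest) := by
  have hy := cf_nonneg rest
  have hn' : (2 : ℚ) ≤ n := by exact_mod_cast hn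
  have hx : 0 < cf (n :: rest) ∧ cf (n :: rest) ≤ 1 / 2 := by
    rw [cf]
    exact ⟨one_div_pos.mpr (by linarith), one_div_le_one_div_of_le two_pos (by linarith)⟩
  have hd : 0 < (m : ℚ) + cf (n :: rest) := by linarith [(Nat.cast_nonneg m : (0 : ℚ) ≤ m)]
  rw [cf, mul_one_div, mul_one_div, div_lt_one hd, le_div_iff₀ hd]
  constructor <;> linarith

lemma den_coprime_num_toNat {r : ℚ} (hr : 0 ≤ r) : r.den.Coprime r.num.toNat := by
  have := Rat.num_nonneg.mpr hr
  simpa [Nat.coprime_comm, show r.num.natAbs = r.num.toNat by omega] using r.reduced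

lemma num_toNat_bounds {r : ℚ} {m : ℕ} (h₁ : (m : ℚ) * r < 1) (h₂ : 2 ≤ (2 * m + 1) * r) :
    0 < r.num.toNat ∧ m * r.num.toNat < r.den ∧ 2 * r.den ≤ (2 * m + 1) * r.num.toNat := by
  have hr : 0 < r := by nlinarith
  have hqp : (r.num.toNat : ℚ) / r.den = r := by
    rw [← Int.cast_natCast, Int.toNat_of_nonneg (Rat.num_nonneg.mpr hr.le), Rat.num_div_den]
  have hp : (0 : ℚ) < r.den := by exact_mod_cast r.den_pos
  rw [← hqp, mul_div_assoc', div_lt_one hp] at h₁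
  rw [← hqp, mul_div_assoc', le_div_iff₀ hp] at h₂
  refine ⟨?_, by exact_mod_cast h₁, by exact_mod_cast h₂⟩
  have := Rat.num_pos.mpr hr
  omega

theorem isCSRep_slopeWord_terms {r : ℚ} {m : ℕ} (hm : 0 < m) (h₁ : (m : ℚ) * r < 1)
    (h₂ : 2 ≤ (2 * m + 1) * r) {L : List ℕ} (hL : IsCSRep (slopeWord r) L) :
    (∀ t ∈ L, t = m ∨ t = m + 1) ∧
      ∀ n, List.IsChain (fun x y => ¬(x = m + 1 ∧ y = m + 1)) (L.rotate n) := by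
  have hco := den_coprime_num_toNat (r := r) (by nlinarith)
  obtain ⟨hq, hA, hB⟩ := num_toNat_bounds h₁ h₂
  set p := r.den
  set q := r.num.toNat
  obtain ⟨n, hn, rfl⟩ := hL
  obtain ⟨k, hk⟩ := exists_Sseq_rotate_uList r.den_pos hq hco hm hA.le hn
  have hper : Function.Periodic (fun j => blockLength p q (k + j)) (2 * q) := fun j => by
    simp only [two_mul, ← Nat.add_assoc]
    rw [blockLength_periodic hq, blockLength_periodic hq]
  refine ⟨fun t ht => ?_, fun n' => ?_⟩
  · obtain ⟨j, -, rfl⟩ := List.mem_map.mp (hk ▸ ht)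
    exact blockLength_eq_or_eq hq hA.le hB _
  · rw [slopeWord, hk, map_range_rotate_of_periodic hper, List.isChain_map, List.isChain_range]
    intro j _
    simpa [Nat.add_right_comm j 1, ← Nat.add_assoc] using
      not_blockLength_eq_succ_and_eq_succ hq hB (k + j + n')

end TwoBridge

theorem CS_terms_general (m1 m2 : ℕ) (rest : List ℕ) (hm1 : 0 < m1) (hm2 : 2 ≤ m2)
    (L : List ℕ) (hL : IsCSRep (slopeWord (cf (m1 :: m2 :: rest))) L) :
    (∀ t ∈ L, t = m1 ∨ t = m1 + 1) ∧
      ∀ n, List.Chain' (fun x y => ¬(x = m1 + 1 ∧ y = m1 + 1)) (L.rotate n) :=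
  TwoBridge.isCSRep_slopeWord_terms hm1 (TwoBridge.cf_cons_cons_bounds m1 hm2 rest).1
    (TwoBridge.cf_cons_cons_bounds m1 hm2 rest).2 hL

/-- For `r = [m₁, m₂, …, m_k]` with `k ≥ 2` and `m₂ ≥ 2`, every term of `CS(r)` is
`m₁` or `m₁+1`, and no two (cyclically) consecutive terms both equal `m₁+1`. -/
theorem CS_terms (m1 m2 : ℕ) (rest : List ℕ) (hm1 : 0 < m1) (hm2 : 2 ≤ m2)
    (hrest : ∀ x ∈ rest, 0 < x) (hlast : ∀ x ∈ (m2 :: rest).getLast?, 2 ≤ x)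
    (L : List ℕ) (hL : IsCSRep (slopeWord (cf (m1 :: m2 :: rest))) L) :
    (∀ t ∈ L, t = m1 ∨ t = m1 + 1) ∧
      ∀ n, List.Chain' (fun x y => ¬(x = m1 + 1 ∧ y = m1 + 1)) (L.rotate n) :=
  CS_terms_general m1 m2 rest hm1 hm2 L hL
end

section
/- Let G₀ = ⟨a, b | u_{r₀} = 1⟩ with r₀ = [4,3,3], let X be the alternating word in {a,b} starting with a and ending with a^{-1} whose S-sequence is (4,4,4,5,4,4), and let f: F(a,b) → F(a,b) be the homomorphism with f(a) = X^{-1}, f(b) = b^{-1}. Then the composition of f with the canonical surjection F(a,b) → G₀ is surjective. -/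
/-!
Since `f(b⁻¹) = b`, it suffices to find `a` in the image of `f` modulo `u_{r₀}`. For the
alternating word `w` with `S(w) = (3,3,3,4,3,3)` starting with `a`, the freely reduced form of
`f(w) a` is a product of three cyclic permutations of `u_{r₀}^{±1}`, so `f(w) = a⁻¹` in `G₀`
and `a = f(w⁻¹)` there.
-/

namespace FreeGroup

variable {α : Type*}

theorem mk_rotate_mem {N : Subgroup (FreeGroup α)} [N.Normal] {L : List (α × Bool)}
    (hL : mk L ∈ N) (n : ℕ) : mk (L.rotate n) ∈ N := by
  have hsplit : mk (L.take (n % L.length)) * mk (L.drop (n % L.length)) ∈ N := by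
    rwa [mul_mk, List.take_append_drop]
  rw [List.rotate_eq_drop_append_take_mod, ← mul_mk]
  exact ‹N.Normal›.mem_comm hsplit

theorem surjective_of_of_mem_range {G H : Type*} [Group G] [Group H] {π : FreeGroup α →* H}
    (hπ : Function.Surjective π) (φ : G →* H) (hφ : ∀ i, π (of i) ∈ φ.range) :
    Function.Surjective φ := by
  rw [← MonoidHom.range_eq_top, eq_top_iff]
  calc ⊤ = π.range := (MonoidHom.range_eq_top.mpr hπ).symm
    _ = (Subgroup.closure (Set.range of)).map π := by
      rw [closure_range_of, MonoidHom.range_eq_map]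
    _ = Subgroup.closure (π '' Set.range of) := MonoidHom.map_closure π _
    _ ≤ φ.range := Subgroup.closure_le _ |>.mpr <| by
      rintro _ ⟨_, ⟨i, rfl⟩, rfl⟩
      exact hφ i

end FreeGroup

theorem mk_invWord (L : Word) : FreeGroup.mk (invWord L) = (FreeGroup.mk L)⁻¹ := by
  rw [FreeGroup.inv_mk]
  rfl

theorem slopeWord_rSlope_zero : slopeWord (rSlope 0) = uList 43 10 := by
  have h : (rSlope 0).den = 43 ∧ (rSlope 0).num = 10 := by norm_num [rSlope, cf]
  rw [slopeWord, h.1, h.2]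
  rfl

def wWord : Word := altWord 0 true [3, 3, 3, 4, 3, 3]

theorem fmap_of_one : fmap (FreeGroup.of 1) = (FreeGroup.of 1)⁻¹ := by
  simp [fmap]

-- The reduced form of `f(w) a` has length `258 = 3 · |u_{r₀}|`; the rotation offsets `78` and `7`
-- are read off from its three blocks of length `86`.
set_option maxRecDepth 10000 in
theorem fmap_wWord_mul_of_zero :
    fmap (FreeGroup.mk wWord) * FreeGroup.of 0 =
      FreeGroup.mk ((uList 43 10).rotate 78) * FreeGroup.mk (uList 43 10) *
        FreeGroup.mk ((invWord (uList 43 10)).rotate 7) := by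
  rw [fmap, FreeGroup.lift_mk]
  decide

theorem fmap_wWord_mul_of_zero_mem :
    fmap (FreeGroup.mk wWord) * FreeGroup.of 0 ∈
      Subgroup.normalClosure {FreeGroup.mk (slopeWord (rSlope 0))} := by
  set N := Subgroup.normalClosure {FreeGroup.mk (slopeWord (rSlope 0))}
  have hu : FreeGroup.mk (uList 43 10) ∈ N :=
    slopeWord_rSlope_zero ▸ Subgroup.subset_normalClosure rfl
  have hu_inv : FreeGroup.mk (invWord (uList 43 10)) ∈ N := by
    rw [mk_invWord]
    exact inv_mem hu
  rw [fmap_wWord_mul_of_zero]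
  exact mul_mem (mul_mem (FreeGroup.mk_rotate_mem hu 78) hu)
    (FreeGroup.mk_rotate_mem hu_inv 7)

/-- The composition of `f : a ↦ X⁻¹, b ↦ b⁻¹` with the canonical surjection
`F(a,b) → G₀ = ⟨a,b | u_{r₀}⟩` is surjective. -/
theorem ftilde_surjective :
    Function.Surjective
      ⇑((QuotientGroup.mk'
          (Subgroup.normalClosure {FreeGroup.mk (slopeWord (rSlope 0))})).comp fmap) := by
  refine FreeGroup.surjective_of_of_mem_range (QuotientGroup.mk'_surjective _) _ fun i => ?_
  fin_cases i
  · refine ⟨(FreeGroup.mk wWord)⁻¹, ?_⟩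
    rw [MonoidHom.comp_apply, map_inv, QuotientGroup.mk'_apply, QuotientGroup.mk'_apply,
      QuotientGroup.eq, inv_inv]
    exact fmap_wWord_mul_of_zero_mem
  · exact ⟨(FreeGroup.of 1)⁻¹, by simp [fmap_of_one]⟩
end
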